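/- arXiv:1609.03706 — 4 statements merged into one kernel-verified Lean document; each statement's English description precedes it below -/
import Mathlib

section
/- Let α and χ be rational numbers with α < 6, and let d, h, k be integers with d > 0. Assume k = α·χ, 12χ − 2k = 5h + 10d − d², 4(d + h) ≤ d², and 96χ ≥ d³ − 114d² + 320d + 120. Then (6 − α)·(d³ − 114d² + 320d + 120) ≤ 12d² + 240d. -/
/-- Numerical core of the finiteness result for surfaces on quartic
hypersurfaces (Proposition on (d, χ)-finiteness for m_X = 4, part 2). -/
theorem quartic_degree_bound (α χ : ℚ) (d h k : ℤ)
    (hα : α < 6) (hd : 0 < d)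
    (hk : (k : ℚ) = α * χ)
    (hdp : 12 * χ - 2 * (k : ℚ) = 5 * (h : ℚ) + 10 * (d : ℚ) - (d : ℚ) ^ 2)
    (hg : 4 * (d + h) ≤ d ^ 2)
    (hDS : 96 * χ ≥ (d : ℚ) ^ 3 - 114 * (d : ℚ) ^ 2 + 320 * (d : ℚ) + 120) :
    (6 - α) * ((d : ℚ) ^ 3 - 114 * (d : ℚ) ^ 2 + 320 * (d : ℚ) + 120) ≤
      12 * (d : ℚ) ^ 2 + 240 * (d : ℚ) := by
  have hgq : 4 * ((d : ℚ) + (h : ℚ)) ≤ (d : ℚ) ^ 2 := by exact_mod_cast hg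
  nlinarith [mul_le_mul_of_nonneg_left hDS (by linarith : (0:ℚ) ≤ 6 - α)]
end

section
/- Let α and χ be rational numbers with α < 6, and let d, h, k be integers with d ≥ 1. Assume k = α·χ, 25χ ≥ d(d² − 40d + 95), 12χ − 2k = 5h + 10d − d², and 5(d + h) ≤ d² + 5d. Then (6 − α)·(d² − 40d + 95) ≤ 125. -/
/-- Numerical core of part 1 (case α < 6) of the (d, χ)-finiteness proposition
for surfaces on quintic hypersurfaces. -/
theorem quintic_bound_alpha_lt_six (α χ : ℚ) (d h k : ℤ)
    (hα : α < 6) (hd : 1 ≤ d)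
    (hk : (k : ℚ) = α * χ)
    (hDS : 25 * χ ≥ (d : ℚ) * ((d : ℚ) ^ 2 - 40 * (d : ℚ) + 95))
    (hdp : 12 * χ - 2 * (k : ℚ) = 5 * (h : ℚ) + 10 * (d : ℚ) - (d : ℚ) ^ 2)
    (hg : 5 * (d + h) ≤ d ^ 2 + 5 * d) :
    (6 - α) * ((d : ℚ) ^ 2 - 40 * (d : ℚ) + 95) ≤ 125 := by
  have hdq : (1 : ℚ) ≤ (d : ℚ) := by exact_mod_cast hd
  have hgq : 5 * ((d : ℚ) + (h : ℚ)) ≤ (d : ℚ) ^ 2 + 5 * (d : ℚ) := by exact_mod_cast hg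
  -- (6 - α) * χ ≤ 5 * d
  have h1 : (6 - α) * χ ≤ 5 * (d : ℚ) := by nlinarith
  have h2 : (6 - α) * ((d : ℚ) * ((d : ℚ) ^ 2 - 40 * (d : ℚ) + 95)) ≤ 125 * (d : ℚ) := by
    nlinarith [mul_le_mul_of_nonneg_left hDS (by linarith : (0:ℚ) ≤ 6 - α)]
  have hdpos : (0 : ℚ) < (d : ℚ) := by linarith
  exact le_of_mul_le_mul_right (by nlinarith) hdpos
end

section
/- There are no integers d, h, k such that d ≥ 5, 13 ≤ k ≤ 14, h < d, d·k ≤ h², and d² − 10d − 5h = 2k − 24. -/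
/-- Numerical core of the χ = 2 case in the lemma on quintic hypersurfaces
with δ_X(s) = 0: the listed conditions are contradictory. -/
theorem no_solution_chi_two :
    ¬ ∃ d h k : ℤ, d ≥ 5 ∧ 13 ≤ k ∧ k ≤ 14 ∧ h < d ∧ d * k ≤ h ^ 2 ∧
      d ^ 2 - 10 * d - 5 * h = 2 * k - 24 := by
  rintro ⟨d, h, k, hd, hk1, hk2, hhd, hsq, heq⟩
  have hd15 : d ≤ 15 := by nlinarith
  interval_cases d <;> interval_cases k <;>
    first
      | omega
      | (have hh : h = (h : ℤ) := rfl; nlinarith [sq_nonneg h, heq, hsq])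
end

section
/- Let d, q, d' be natural numbers with d ≥ 5, q ≥ 1, 4 ≤ d' ≤ 6, d² − 9d + 2d' = 16(q − 1), and d + 6d' ≤ 45. Assume moreover that q ≤ 1 if d' = 4, that q ≤ 2 if d' = 5, and that q ≤ 4 if d' = 6. Then d = 8, d' = 4, and q = 1. -/
/-- Numerical core of the proposition on the adjoint bundle for irregular
surfaces on quartic hypersurfaces with ordinary double points: the only
possibility is the ADSR elliptic conic bundle of degree 8. -/
theorem conic_bundle_numerics (d q d' : ℕ)
    (hd : 5 ≤ d) (hq : 1 ≤ q) (hd'l : 4 ≤ d') (hd'u : d' ≤ 6)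
    (hdp : (d : ℤ) ^ 2 - 9 * (d : ℤ) + 2 * (d' : ℤ) = 16 * ((q : ℤ) - 1))
    (hZ : d + 6 * d' ≤ 45)
    (h4 : d' = 4 → q ≤ 1) (h5 : d' = 5 → q ≤ 2) (h6 : d' = 6 → q ≤ 4) :
    d = 8 ∧ d' = 4 ∧ q = 1 := by
  have hdu : d ≤ 21 := by omega
  interval_cases d' <;> interval_cases d <;> (norm_num at hdp ⊢) <;> omega
end
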